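/- Suppose A ∈ ℝ^{n×n}, q, p ∈ ℝⁿ, δ ≥ 0, κ, μ > 0, c > 0, and (diag(p)A + (β - gp)pᵀ)ˢ = 0, Aᵀp = -(μ - gκ)p - κβ for some β ∈ ℝ₊ⁿ, g ≥ 0. Define W_c(x) = (q - cp)ᵀ(x - 1ₙ) - Σᵢ (qᵢ - c pᵢ) ln xᵢ + c(S - κ - κ ln(S/κ)) with S = pᵀ(x - 1ₙ) + κ. Then along ẋ = diag(x)A(x - 1ₙ), for all x in int(ℝ₊ⁿ) with S > 0: Ẇ_c(x) = (x - 1ₙ)ᵀ(diag(q)A - δ p pᵀ)ˢ(x - 1ₙ) - (cμ/S - δ)·(pᵀ(x - 1ₙ))². -/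

import Mathlib

/-!
With `V_κ(s) = s - κ - κ log (s / κ)` and `a = q - c p`, the function is
`W_c(x) = ∑ᵢ aᵢ V₁(xᵢ) + c V_κ(S(x))`. Since `V_κ'(s) = 1 - κ / s`, the orbital derivative
along `ẋᵢ = xᵢ (A y)ᵢ`, `y = x - 1ₙ`, is
`yᵀ diag(a) A y + c (1 - κ / S) (yᵀ diag(p) A y + pᵀ A y)`.
The symmetry hypothesis gives `yᵀ diag(p) A y = -(βᵀy - g pᵀy) pᵀy` and the second one gives
`pᵀ A y = -(μ - gκ) pᵀy - κ βᵀy`; with `S = pᵀy + κ` all terms containing `β` and `g` cancel.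
-/

open Matrix Real

section QuadraticForms

variable {ι K : Type*} [Fintype ι] [Field K]

theorem dotProduct_half_add_transpose_mulVec [NeZero (2 : K)] (M : Matrix ι ι K) (y : ι → K) :
    y ⬝ᵥ ((1 / 2 : K) • (M + Mᵀ)) *ᵥ y = y ⬝ᵥ M *ᵥ y := by
  rw [smul_mulVec, add_mulVec, dotProduct_smul, dotProduct_add, dotProduct_transpose_mulVec,
    smul_eq_mul, ← two_mul, ← mul_assoc, one_div, inv_mul_cancel₀ two_ne_zero, one_mul]

theorem dotProduct_mulVec_eq_zero_of_half_add_transpose_eq_zero {M : Matrix ι ι K}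
    [NeZero (2 : K)] (hM : (1 / 2 : K) • (M + Mᵀ) = 0) (y : ι → K) : y ⬝ᵥ M *ᵥ y = 0 := by
  rw [← dotProduct_half_add_transpose_mulVec, hM, zero_mulVec, dotProduct_zero]

theorem dotProduct_vecMulVec_mulVec (u v y : ι → K) :
    y ⬝ᵥ vecMulVec u v *ᵥ y = (y ⬝ᵥ u) * (v ⬝ᵥ y) := by
  rw [vecMulVec_mulVec, dotProduct_smul, MulOpposite.smul_eq_mul_unop, MulOpposite.unop_op,
    mul_comm]

theorem dotProduct_diagonal_mul_mulVec [DecidableEq ι] (a y : ι → K) (A : Matrix ι ι K) :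
    y ⬝ᵥ (diagonal a * A) *ᵥ y = ∑ i, a i * y i * (A *ᵥ y) i := by
  rw [← mulVec_mulVec]
  simp only [dotProduct, mulVec_diagonal]
  exact Finset.sum_congr rfl fun i _ => by ring

theorem dotProduct_diagonal_sub_smul_mul_mulVec [DecidableEq ι] (a b y : ι → K) (c : K)
    (A : Matrix ι ι K) :
    y ⬝ᵥ (diagonal (a - c • b) * A) *ᵥ y
      = y ⬝ᵥ (diagonal a * A) *ᵥ y - c * y ⬝ᵥ (diagonal b * A) *ᵥ y := by
  simp only [dotProduct_diagonal_mul_mulVec, Finset.mul_sum, ← Finset.sum_sub_distrib]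
  refine Finset.sum_congr rfl fun i _ => ?_
  simp only [Pi.sub_apply, Pi.smul_apply, smul_eq_mul]
  ring

end QuadraticForms

noncomputable def volterra (κ s : ℝ) : ℝ := s - κ - κ * log (s / κ)

theorem hasDerivAt_volterra {κ s : ℝ} (hκ : κ ≠ 0) (hs : s ≠ 0) :
    HasDerivAt (volterra κ) (1 - κ / s) s := by
  have hlog := (((hasDerivAt_id' s).div_const κ).log (div_ne_zero hs hκ)).const_mul κ
  exact (((hasDerivAt_id' s).sub_const κ).sub hlog).congr_deriv (by field_simp)

theorem hasFDerivAt_sum_comp_apply {𝕜 ι : Type*} [NontriviallyNormedField 𝕜] [Fintype ι]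
    {f : ι → 𝕜 → 𝕜} {f' : ι → 𝕜} {x : ι → 𝕜} (hf : ∀ i, HasDerivAt (f i) (f' i) (x i)) :
    HasFDerivAt (fun y : ι → 𝕜 => ∑ i, f i (y i))
      (∑ i, f' i • ContinuousLinearMap.proj (R := 𝕜) (φ := fun _ : ι => 𝕜) i) x :=
  HasFDerivAt.fun_sum fun i _ => (hf i).comp_hasFDerivAt x (hasFDerivAt_apply i x)

section Lyapunov

variable {ι : Type*} [Fintype ι]

noncomputable def volterraLyapunov (a p : ι → ℝ) (c κ : ℝ) (x : ι → ℝ) : ℝ :=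
  ∑ i, a i * volterra 1 (x i) + c * volterra κ (p ⬝ᵥ (x - 1) + κ)

theorem sum_mul_volterra_one (a x : ι → ℝ) :
    ∑ i, a i * volterra 1 (x i) = a ⬝ᵥ (x - 1) - ∑ i, a i * log (x i) := by
  simp only [volterra, div_one, one_mul, dotProduct, Pi.sub_apply, Pi.one_apply,
    ← Finset.sum_sub_distrib, mul_sub]

theorem fderiv_volterraLyapunov_apply {a p x : ι → ℝ} {c κ : ℝ} (hκ : κ ≠ 0)
    (hx : ∀ i, x i ≠ 0) (hS : p ⬝ᵥ (x - 1) + κ ≠ 0) (v : ι → ℝ) :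
    fderiv ℝ (volterraLyapunov a p c κ) x v
      = ∑ i, a i * (1 - (x i)⁻¹) * v i + c * (1 - κ / (p ⬝ᵥ (x - 1) + κ)) * (p ⬝ᵥ v) := by
  have hsum := hasFDerivAt_sum_comp_apply fun i =>
    (hasDerivAt_volterra one_ne_zero (hx i)).const_mul (a i)
  have hS' : HasFDerivAt (fun y : ι → ℝ => p ⬝ᵥ (y - 1) + κ)
      (∑ i, p i • ContinuousLinearMap.proj (R := ℝ) (φ := fun _ : ι => ℝ) i) x := by
    simpa [dotProduct] using (hasFDerivAt_sum_comp_apply fun i =>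
      ((hasDerivAt_id (x i)).sub_const 1).const_mul (p i)).add_const κ
  have hW : HasFDerivAt (volterraLyapunov a p c κ) _ x :=
    hsum.add (((hasDerivAt_volterra hκ hS).comp_hasFDerivAt x hS').const_mul c :)
  rw [hW.fderiv]
  simp [dotProduct, mul_assoc]

theorem fderiv_volterraLyapunov_apply_lotkaVolterra [DecidableEq ι] {a p x : ι → ℝ} {c κ : ℝ}
    (hκ : κ ≠ 0) (hx : ∀ i, x i ≠ 0) (hS : p ⬝ᵥ (x - 1) + κ ≠ 0) (A : Matrix ι ι ℝ) :
    fderiv ℝ (volterraLyapunov a p c κ) x (fun i => x i * (A *ᵥ (x - 1)) i)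
      = (x - 1) ⬝ᵥ (diagonal a * A) *ᵥ (x - 1) + c * (1 - κ / (p ⬝ᵥ (x - 1) + κ))
          * ((x - 1) ⬝ᵥ (diagonal p * A) *ᵥ (x - 1) + p ⬝ᵥ A *ᵥ (x - 1)) := by
  rw [fderiv_volterraLyapunov_apply hκ hx hS, dotProduct_diagonal_mul_mulVec,
    dotProduct_diagonal_mul_mulVec]
  congr 1
  · refine Finset.sum_congr rfl fun i _ => ?_
    simp only [Pi.sub_apply, Pi.one_apply]
    field_simp [hx i]
  · simp only [dotProduct, ← Finset.sum_add_distrib, Pi.sub_apply, Pi.one_apply]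
    congr 1
    exact Finset.sum_congr rfl fun i _ => by ring

end Lyapunov

theorem stmt16_general (n : ℕ) (A : Matrix (Fin n) (Fin n) ℝ) (q p β : Fin n → ℝ)
    (δ κ μ c g : ℝ) (hκ : 0 < κ)
    (h1 : (1/2 : ℝ) • ((Matrix.diagonal p * A + Matrix.vecMulVec (β - g • p) p)
        + (Matrix.diagonal p * A + Matrix.vecMulVec (β - g • p) p)ᵀ) = 0)
    (h2 : Aᵀ *ᵥ p = -(μ - g * κ) • p - κ • β)
    (S W : (Fin n → ℝ) → ℝ)
    (hS : ∀ x : Fin n → ℝ, S x = p ⬝ᵥ (x - 1) + κ)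
    (hW : ∀ x : Fin n → ℝ,
      W x = (q - c • p) ⬝ᵥ (x - 1) - ∑ i, (q i - c * p i) * Real.log (x i)
        + c * (S x - κ - κ * Real.log (S x / κ)))
    (F : (Fin n → ℝ) → (Fin n → ℝ))
    (hF : ∀ x : Fin n → ℝ, F x = fun i => x i * (A *ᵥ (x - 1)) i)
    (Q : Matrix (Fin n) (Fin n) ℝ)
    (hQ : Q = (1/2 : ℝ) • ((Matrix.diagonal q * A - δ • Matrix.vecMulVec p p)
      + (Matrix.diagonal q * A - δ • Matrix.vecMulVec p p)ᵀ)) :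
    ∀ x : Fin n → ℝ, (∀ i, 0 < x i) → 0 < S x →
      fderiv ℝ W x (F x)
        = (x - 1) ⬝ᵥ (Q *ᵥ (x - 1)) - (c * μ / S x - δ) * (p ⬝ᵥ (x - 1))^2 := by
  intro x hx hSx
  set y := x - 1
  have hSy : S x = p ⬝ᵥ y + κ := hS x
  have hSy0 : p ⬝ᵥ y + κ ≠ 0 := hSy ▸ hSx.ne'
  have hW_eq : W = volterraLyapunov (q - c • p) p c κ := by
    funext z
    rw [hW, hS, volterraLyapunov, sum_mul_volterra_one]
    rfl
  rw [hW_eq, hF, fderiv_volterraLyapunov_apply_lotkaVolterra hκ.ne' (fun i => (hx i).ne') hSy0,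
    ← hSy]
  have hT : y ⬝ᵥ (diagonal p * A) *ᵥ y = -((β - g • p) ⬝ᵥ y) * (p ⬝ᵥ y) := by
    have := dotProduct_mulVec_eq_zero_of_half_add_transpose_eq_zero h1 y
    rw [add_mulVec, dotProduct_add, dotProduct_vecMulVec_mulVec,
      dotProduct_comm y (β - g • p)] at this
    linarith
  have hpd : p ⬝ᵥ A *ᵥ y = -(μ - g * κ) * (p ⬝ᵥ y) - κ * (β ⬝ᵥ y) := by
    rw [dotProduct_mulVec, ← mulVec_transpose, h2, sub_dotProduct, smul_dotProduct,
      smul_dotProduct, smul_eq_mul, smul_eq_mul]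
  have hQy : y ⬝ᵥ Q *ᵥ y = y ⬝ᵥ (diagonal q * A) *ᵥ y - δ * (p ⬝ᵥ y) ^ 2 := by
    rw [hQ, dotProduct_half_add_transpose_mulVec, sub_mulVec, dotProduct_sub, smul_mulVec,
      dotProduct_smul, dotProduct_vecMulVec_mulVec, dotProduct_comm y p, smul_eq_mul, sq]
  rw [dotProduct_diagonal_sub_smul_mul_mulVec, hT, hpd, hQy, hSy, sub_dotProduct β, smul_dotProduct g p, smul_eq_mul]
  field_simp
  ring

/-- Under (diag(p)A + (β - gp)pᵀ)ˢ = 0 and Aᵀp = -(μ-gκ)p - κβ with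
β ∈ ℝ₊ⁿ, g ≥ 0, the function
W_c(x) = (q - cp)ᵀ(x-1ₙ) - Σᵢ(qᵢ - c pᵢ) ln xᵢ + c(S - κ - κ ln(S/κ)),
S = pᵀ(x-1ₙ) + κ, satisfies along ẋ = diag(x)A(x-1ₙ), for x in the positive orthant
with S > 0: Ẇ_c(x) = (x-1ₙ)ᵀ(diag(q)A - δ p pᵀ)ˢ(x-1ₙ) - (cμ/S - δ)(pᵀ(x-1ₙ))². -/
theorem stmt16 (n : ℕ) (A : Matrix (Fin n) (Fin n) ℝ) (q p β : Fin n → ℝ)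
    (δ κ μ c g : ℝ) (hδ : 0 ≤ δ) (hκ : 0 < κ) (hμ : 0 < μ) (hc : 0 < c)
    (hβ : ∀ i, 0 ≤ β i) (hg : 0 ≤ g)
    (h1 : (1/2 : ℝ) • ((Matrix.diagonal p * A + Matrix.vecMulVec (β - g • p) p)
        + (Matrix.diagonal p * A + Matrix.vecMulVec (β - g • p) p)ᵀ) = 0)
    (h2 : Aᵀ *ᵥ p = -(μ - g * κ) • p - κ • β)
    (S W : (Fin n → ℝ) → ℝ)
    (hS : ∀ x : Fin n → ℝ, S x = p ⬝ᵥ (x - 1) + κ)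
    (hW : ∀ x : Fin n → ℝ,
      W x = (q - c • p) ⬝ᵥ (x - 1) - ∑ i, (q i - c * p i) * Real.log (x i)
        + c * (S x - κ - κ * Real.log (S x / κ)))
    (F : (Fin n → ℝ) → (Fin n → ℝ))
    (hF : ∀ x : Fin n → ℝ, F x = fun i => x i * (A *ᵥ (x - 1)) i)
    (Q : Matrix (Fin n) (Fin n) ℝ)
    (hQ : Q = (1/2 : ℝ) • ((Matrix.diagonal q * A - δ • Matrix.vecMulVec p p)
      + (Matrix.diagonal q * A - δ • Matrix.vecMulVec p p)ᵀ)) :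
    ∀ x : Fin n → ℝ, (∀ i, 0 < x i) → 0 < S x →
      fderiv ℝ W x (F x)
        = (x - 1) ⬝ᵥ (Q *ᵥ (x - 1)) - (c * μ / S x - δ) * (p ⬝ᵥ (x - 1))^2 :=
  stmt16_general n A q p β δ κ μ c g hκ h1 h2 S W hS hW F hF Q hQ
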